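/- If x and y are vectors in R^{n+1} with a symmetric bilinear form S of signature (n,1), both lying in the same component V⁺ of the negative cone (so S(x,x) < 0, S(y,y) < 0), then -S(x,y)/√(S(x,x)·S(y,y)) ≥ 1, with equality if and only if x and y are positive scalar multiples of each other. -/

import Mathlib

/-!
Let `ℓ` be the last coordinate in the basis `b`. The form `S` is positive definite on `ker ℓ`,
and `ℓ` vanishes nowhere on the connected set `C`, so `ℓ x` and `ℓ y` have the same sign.
For `τ = ℓ y / ℓ x > 0` the vector `y - τ • x` lies in `ker ℓ`, hence the quadratic polynomial
`S (y - τ • x) (y - τ • x)` in `τ`, whose leading coefficient `S x x` is negative, takes a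
nonnegative value. Its discriminant `4 (S x y ^ 2 - S x x * S y y)` is therefore nonnegative,
and it vanishes only if `y - τ • x = 0`.
-/

section DiagonalForm

variable {ι V : Type*} [Fintype ι] [DecidableEq ι] [AddCommGroup V] [Module ℝ V]
  (b : Module.Basis ι ℝ V) {S : V →ₗ[ℝ] V →ₗ[ℝ] ℝ} {σ : ι → ℝ}

lemma Module.Basis.bilin_apply_eq_sum_of_diag
    (hS : ∀ i j, S (b i) (b j) = if i = j then σ i else 0) (u v : V) :
    S u v = ∑ i, b.repr u i * b.repr v i * σ i := by
  conv_lhs => rw [← b.sum_repr u, ← b.sum_repr v]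
  simp only [map_sum, map_smul, LinearMap.sum_apply, LinearMap.smul_apply, smul_eq_mul, hS,
    mul_ite, mul_zero, Finset.sum_ite_eq', Finset.mem_univ, if_true]
  exact Finset.sum_congr rfl fun i _ => by ring

lemma Module.Basis.bilin_apply_self_pos_of_coord_eq_zero
    (hS : ∀ i j, S (b i) (b j) = if i = j then σ i else 0) {i₀ : ι} (hσ : ∀ i, i ≠ i₀ → 0 < σ i)
    {z : V} (hz : b.coord i₀ z = 0) (hz0 : z ≠ 0) : 0 < S z z := by
  rw [b.bilin_apply_eq_sum_of_diag hS]
  obtain ⟨i, hi⟩ : ∃ i, b.repr z i ≠ 0 := by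
    by_contra! h
    exact hz0 (b.ext_elem fun i => by simp [h i])
  have hterm : ∀ j, 0 ≤ b.repr z j * b.repr z j * σ j := by
    intro j
    rcases eq_or_ne j i₀ with rfl | hj
    · simp [← b.coord_apply, hz]
    · exact mul_nonneg (mul_self_nonneg _) (hσ j hj).le
  have hi₀ : i ≠ i₀ := by rintro rfl; exact hi hz
  exact Finset.sum_pos' (fun j _ => hterm j)
    ⟨i, Finset.mem_univ i, mul_pos (mul_self_pos.2 hi) (hσ i hi₀)⟩

end DiagonalForm

lemma IsPreconnected.mul_pos_of_forall_ne_zero {X : Type*} [TopologicalSpace X] {C : Set X}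
    (hC : IsPreconnected C) {f : X → ℝ} (hf : ContinuousOn f C) (hf0 : ∀ z ∈ C, f z ≠ 0)
    {x y : X} (hx : x ∈ C) (hy : y ∈ C) : 0 < f x * f y := by
  by_contra! h
  obtain ⟨z, hz, hfz⟩ : (0 : ℝ) ∈ f '' C := by
    rcases mul_nonpos_iff.1 h with ⟨hx0, hy0⟩ | ⟨hx0, hy0⟩
    · exact hC.intermediate_value hy hx hf ⟨hy0, hx0⟩
    · exact hC.intermediate_value hx hy hf ⟨hx0, hy0⟩
  exact hf0 z hz hfz

section NegativeCone

variable {V : Type*} [AddCommGroup V] [Module ℝ V] {S : V →ₗ[ℝ] V →ₗ[ℝ] ℝ}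

lemma LinearMap.apply_sub_smul_sub_smul (hS : ∀ x y, S x y = S y x) (x y : V) (τ : ℝ) :
    S (y - τ • x) (y - τ • x) = S y y - 2 * τ * S x y + τ ^ 2 * S x x := by
  simp only [map_sub, map_smul, LinearMap.sub_apply, LinearMap.smul_apply, smul_eq_mul, hS y x]
  ring

lemma LinearMap.apply_ne_zero_of_apply_self_neg {ℓ : V →ₗ[ℝ] ℝ}
    (hℓ : ∀ z, ℓ z = 0 → z ≠ 0 → 0 < S z z) {x : V} (hx : S x x < 0) : ℓ x ≠ 0 := by
  intro h
  have hx0 : x ≠ 0 := by rintro rfl; simp at hx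
  exact (hℓ x h hx0).not_gt hx

theorem LinearMap.reverse_cauchy_schwarz_of_pos_on_ker (hS : ∀ x y, S x y = S y x)
    {ℓ : V →ₗ[ℝ] ℝ} (hℓ : ∀ z, ℓ z = 0 → z ≠ 0 → 0 < S z z) {x y : V}
    (hx : S x x < 0) (hy : S y y < 0) (hxy : 0 < ℓ x * ℓ y) :
    S x y < 0 ∧ S x x * S y y ≤ S x y ^ 2 ∧
      (S x y ^ 2 = S x x * S y y → ∃ t : ℝ, 0 < t ∧ y = t • x) := by
  set τ := ℓ y / ℓ x
  have hτ : 0 < τ := div_pos_iff.2 ((mul_pos_iff.1 hxy).imp And.symm And.symm)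
  have hker : ℓ (y - τ • x) = 0 := by
    simp [τ, div_mul_cancel₀ _ (LinearMap.apply_ne_zero_of_apply_self_neg hℓ hx)]
  have hq : 0 ≤ S (y - τ • x) (y - τ • x) := by
    rcases eq_or_ne (y - τ • x) 0 with h | h
    · simp [h]
    · exact (hℓ _ hker h).le
  rw [LinearMap.apply_sub_smul_sub_smul hS] at hq
  have hdiscr : S x x * (S y y - 2 * τ * S x y + τ ^ 2 * S x x)
      = (τ * S x x - S x y) ^ 2 - (S x y ^ 2 - S x x * S y y) := by ring
  refine ⟨by nlinarith, by nlinarith [sq_nonneg (τ * S x x - S x y)], fun heq => ⟨τ, hτ, ?_⟩⟩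
  have hq0 : S (y - τ • x) (y - τ • x) = 0 := by
    rw [LinearMap.apply_sub_smul_sub_smul hS]
    nlinarith [sq_nonneg (τ * S x x - S x y)]
  by_contra hne
  exact (hℓ _ hker (sub_ne_zero.2 hne)).ne' hq0

end NegativeCone

lemma one_le_neg_div_sqrt_and_eq_one_iff {p D : ℝ} (hp : p < 0) (hD : 0 < D) (hDp : D ≤ p ^ 2) :
    1 ≤ -p / √D ∧ (-p / √D = 1 ↔ p ^ 2 = D) := by
  have hsqrt : 0 < √D := Real.sqrt_pos.2 hD
  rw [one_le_div hsqrt, div_eq_one_iff_eq hsqrt.ne', Real.sqrt_le_left (by linarith), eq_comm,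
    Real.sqrt_eq_iff_eq_sq hD.le (by linarith), neg_sq]
  exact ⟨hDp, eq_comm⟩

/-- if `x, y` lie in the same component `V⁺` of the negative cone of a
symmetric bilinear form `S` of signature `(n,1)` on `ℝ^{n+1}` (so `S x x < 0`, `S y y < 0`),
then `-S x y / √(S x x · S y y) ≥ 1`, with equality iff `y` is a positive multiple of `x`. -/
theorem reverse_cauchy_schwarz_negative_cone
    (n : ℕ)
    (S : (Fin (n + 1) → ℝ) →ₗ[ℝ] (Fin (n + 1) → ℝ) →ₗ[ℝ] ℝ)
    (hsymm : ∀ x y, S x y = S y x)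
    (b : Module.Basis (Fin (n + 1)) ℝ (Fin (n + 1) → ℝ))
    (hsig : ∀ i j, S (b i) (b j) =
      if i = j then (if (i : ℕ) < n then 1 else -1) else 0)
    (x y : Fin (n + 1) → ℝ) (hx : S x x < 0) (hy : S y y < 0)
    (hsame : ∃ C : Set (Fin (n + 1) → ℝ), IsPreconnected C ∧ (∀ z ∈ C, S z z < 0) ∧
      x ∈ C ∧ y ∈ C) :
    1 ≤ -S x y / Real.sqrt (S x x * S y y) ∧
      (-S x y / Real.sqrt (S x x * S y y) = 1 ↔ ∃ t : ℝ, 0 < t ∧ y = t • x) := by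
  obtain ⟨C, hC, hCneg, hxC, hyC⟩ := hsame
  set ℓ := b.coord (Fin.last n)
  have hker : ∀ z, ℓ z = 0 → z ≠ 0 → 0 < S z z := fun z =>
    b.bilin_apply_self_pos_of_coord_eq_zero hsig fun i hi => by
      simp [Fin.val_lt_last hi]
  have hsign : 0 < ℓ x * ℓ y :=
    hC.mul_pos_of_forall_ne_zero ℓ.continuous_of_finiteDimensional.continuousOn
      (fun z hz => LinearMap.apply_ne_zero_of_apply_self_neg hker (hCneg z hz)) hxC hyC
  obtain ⟨hneg, hle, heq⟩ := LinearMap.reverse_cauchy_schwarz_of_pos_on_ker hsymm hker hx hy hsign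
  obtain ⟨hge, heq_iff⟩ := one_le_neg_div_sqrt_and_eq_one_iff hneg (mul_pos_of_neg_of_neg hx hy) hle
  refine ⟨hge, heq_iff.trans ⟨heq, ?_⟩⟩
  rintro ⟨t, -, rfl⟩
  simp only [map_smul, LinearMap.smul_apply, smul_eq_mul]
  ring
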